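/- For all real numbers α, β with 1 ≤ α ≤ β, the function v(x) = (1 − x^{−α})/(1 − x^{−β}) is monotonically nondecreasing on (1, ∞): for all real x, y with 1 < x ≤ y, v(x) ≤ v(y). -/

import Mathlib

/-!
Substitute `t = x ^ (-α) ∈ (0, 1)` and `r = β / α ≥ 1`, so that `x ^ (-β) = t ^ r` and
`v(x) = (1 - t) / (1 - t ^ r)`. This is the reciprocal of the slope of the secant of the convex
function `t ↦ t ^ r` through the point `(1, 1)`, which is monotone in `t`; since `t` decreases
as `x` grows, `v` increases.
-/

open Real Set

lemma one_sub_rpow_div_one_sub_mono {r a b : ℝ} (hr : 1 ≤ r) (hb : 0 ≤ b) (hba : b ≤ a)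
    (ha : a < 1) :
    (1 - b ^ r) / (1 - b) ≤ (1 - a ^ r) / (1 - a) := by
  have hsec := (convexOn_rpow hr).secant_mono (a := 1) (mem_Ici.2 zero_le_one) (mem_Ici.2 hb)
    (mem_Ici.2 (hb.trans hba)) (hba.trans_lt ha).ne ha.ne hba
  rwa [one_rpow, ← neg_div_neg_eq, ← neg_div_neg_eq (a ^ r - 1), neg_sub, neg_sub, neg_sub,
    neg_sub] at hsec

lemma one_sub_div_one_sub_rpow_anti {r a b : ℝ} (hr : 1 ≤ r) (hb : 0 ≤ b) (hba : b ≤ a)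
    (ha : a < 1) :
    (1 - a) / (1 - a ^ r) ≤ (1 - b) / (1 - b ^ r) := by
  have hb1 : b < 1 := hba.trans_lt ha
  have hbr : b ^ r < 1 := rpow_lt_one hb hb1 (by linarith)
  rw [← inv_div (1 - a ^ r), ← inv_div (1 - b ^ r)]
  exact inv_anti₀ (div_pos (by linarith) (by linarith))
    (one_sub_rpow_div_one_sub_mono hr hb hba ha)

lemma rpow_neg_eq_rpow_neg_rpow_div {x : ℝ} (hx : 0 ≤ x) (α β : ℝ) (hα : α ≠ 0) :
    x ^ (-β) = (x ^ (-α)) ^ (β / α) := by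
  rw [← rpow_mul hx]
  congr 1
  field_simp

theorem stmt_1 (α β : ℝ) (hα : 1 ≤ α) (hαβ : α ≤ β) (x y : ℝ) (hx : 1 < x) (hxy : x ≤ y) :
    (1 - x ^ (-α)) / (1 - x ^ (-β)) ≤ (1 - y ^ (-α)) / (1 - y ^ (-β)) := by
  have hα0 : 0 < α := by linarith
  have hx0 : 0 < x := by linarith
  have hr : 1 ≤ β / α := (one_le_div hα0).2 hαβ
  rw [rpow_neg_eq_rpow_neg_rpow_div hx0.le α β hα0.ne',
    rpow_neg_eq_rpow_neg_rpow_div (hx0.trans_le hxy).le α β hα0.ne']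
  exact one_sub_div_one_sub_rpow_anti hr (rpow_nonneg (by linarith) _)
    (rpow_le_rpow_of_nonpos hx0 hxy (by linarith))
    (rpow_lt_one_of_one_lt_of_neg hx (by linarith))
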